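/- arXiv:math/0606529 — 2 statements merged into one kernel-verified Lean document; each statement's English description precedes it below -/
import Mathlib

section
/- Let A and B be mass problems such that for every finite subset C of A one has ¬(B ∪ C ≤_w A). Then there exists f ∈ A such that ¬(B ≤_w {f}) and ¬(B ∪ {f} ≤_w A) (so the mass problem {f} satisfies A ≤_w {f} and ¬(B ≤_w {f})). If moreover A ≤_w B, then there is a sequence of mass problems (D_n)_{n ∈ ℕ} with A <_w D_{n+1} <_w D_n <_w B for all n; in particular the interval (A, B) in the Muchnik order contains infinitely many pairwise non-equivalent elements. -/
open Cardinal

namespace Muchnik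

/-- Oracle partial recursiveness: `f` is partial recursive relative to the oracle `g`. -/
inductive RecursiveIn (g : ℕ → ℕ) : (ℕ →. ℕ) → Prop
  | oracle : RecursiveIn g ↑g
  | zero : RecursiveIn g (pure 0)
  | succ : RecursiveIn g ↑Nat.succ
  | left : RecursiveIn g ↑fun n : ℕ => n.unpair.1
  | right : RecursiveIn g ↑fun n : ℕ => n.unpair.2
  | pair {f h} : RecursiveIn g f → RecursiveIn g h →
      RecursiveIn g fun n => Nat.pair <$> f n <*> h n
  | comp {f h} : RecursiveIn g f → RecursiveIn g h →
      RecursiveIn g fun n => h n >>= f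
  | prec {f h} : RecursiveIn g f → RecursiveIn g h →
      RecursiveIn g (Nat.unpaired fun a n =>
        n.rec (f a) fun y IH => do let i ← IH; h (Nat.pair a (Nat.pair y i)))
  | rfind {f} : RecursiveIn g f →
      RecursiveIn g fun a => Nat.rfind fun n => (fun m => m = 0) <$> f (Nat.pair a n)

/-- Turing reducibility `f ≤_T g` for elements of Baire space. -/
def TuringLe (f g : ℕ → ℕ) : Prop := RecursiveIn g ↑f

/-- Strict Turing reducibility `f <_T g`. -/
def TuringLt (f g : ℕ → ℕ) : Prop := TuringLe f g ∧ ¬ TuringLe g f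

/-- Turing equivalence `f ≡_T g`. -/
def TuringEquiv (f g : ℕ → ℕ) : Prop := TuringLe f g ∧ TuringLe g f

/-- Turing incomparability `f |_T g`. -/
def TuringIncomp (f g : ℕ → ℕ) : Prop := ¬ TuringLe f g ∧ ¬ TuringLe g f

/-- Muchnik reducibility `A ≤_w B` between mass problems. -/
def MuchnikLe (A B : Set (ℕ → ℕ)) : Prop := ∀ f ∈ B, ∃ g ∈ A, TuringLe g f

/-- Strict Muchnik reducibility `A <_w B`. -/
def MuchnikLt (A B : Set (ℕ → ℕ)) : Prop := MuchnikLe A B ∧ ¬ MuchnikLe B A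

/-- Muchnik equivalence `A ≡_w B`. -/
def MuchnikEquiv (A B : Set (ℕ → ℕ)) : Prop := MuchnikLe A B ∧ MuchnikLe B A

/-- The strict Turing upper cone `C'(f) = {g : f <_T g}`. -/
def cone (f : ℕ → ℕ) : Set (ℕ → ℕ) := {g | TuringLt f g}

/-- The recursive join `f ⊕ g`: `(f ⊕ g)(2x) = f(x)` and `(f ⊕ g)(2x+1) = g(x)`. -/
def join (f g : ℕ → ℕ) : ℕ → ℕ := fun n => if n % 2 = 0 then f (n / 2) else g (n / 2)

/-- The join `A + B` of mass problems. -/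
def joinSet (A B : Set (ℕ → ℕ)) : Set (ℕ → ℕ) := {h | ∃ f ∈ A, ∃ g ∈ B, h = join f g}

/-- Identification of `2^ω` with a subset of Baire space. -/
def ofBool (X : ℕ → Bool) : ℕ → ℕ := fun n => if X n then 1 else 0


theorem turingLe_refl (f : ℕ → ℕ) : TuringLe f f := RecursiveIn.oracle

/-- Auxiliary list of chosen functions. -/
noncomputable def auxList (ch : Set (ℕ → ℕ) → (ℕ → ℕ)) : ℕ → List (ℕ → ℕ)
  | 0 => []
  | n + 1 => ch {g | g ∈ auxList ch n} :: auxList ch n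

/-- If for every finite `C ⊆ A` one has `¬(B ∪ C ≤_w A)`, then there is `f ∈ A` with
`¬(B ≤_w {f})` and `¬(B ∪ {f} ≤_w A)` (and then `A ≤_w {f}`); moreover, if in addition
`A ≤_w B`, then the interval `(A, B)` contains an infinite strictly descending chain of
mass problems, in particular infinitely many pairwise non-equivalent elements. -/
theorem subst_lemma (A B : Set (ℕ → ℕ))
    (h : ∀ C : Set (ℕ → ℕ), C ⊆ A → C.Finite → ¬ MuchnikLe (B ∪ C) A) :
    (∃ f ∈ A, MuchnikLe A {f} ∧ ¬ MuchnikLe B {f} ∧ ¬ MuchnikLe (B ∪ {f}) A) ∧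
    (MuchnikLe A B → ∃ D : ℕ → Set (ℕ → ℕ), ∀ n : ℕ,
      MuchnikLt A (D (n + 1)) ∧ MuchnikLt (D (n + 1)) (D n) ∧ MuchnikLt (D n) B) := by
  classical
  have key : ∀ C : Set (ℕ → ℕ), ∃ f : ℕ → ℕ,
      (C ⊆ A ∧ C.Finite) → f ∈ A ∧ ∀ g, (g ∈ B ∨ g ∈ C) → ¬ TuringLe g f := by
    intro C
    by_cases hC : C ⊆ A ∧ C.Finite
    · have h1 := h C hC.1 hC.2
      rw [MuchnikLe] at h1
      push_neg at h1
      obtain ⟨f, hfA, hf⟩ := h1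
      exact ⟨f, fun _ => ⟨hfA, fun g hg => hf g hg⟩⟩
    · exact ⟨fun _ => 0, fun hc => absurd hc hC⟩
  choose ch hch using key
  set S : ℕ → Set (ℕ → ℕ) := fun n => {g | g ∈ auxList ch n} with hS
  set seq : ℕ → (ℕ → ℕ) := fun n => ch (S n) with hseq
  have hSsucc : ∀ n, S (n + 1) = insert (seq n) (S n) := by
    intro n
    ext g
    simp [hS, auxList, hseq]
  have hSA : ∀ n, S n ⊆ A ∧ (S n).Finite := by
    intro n
    induction n with
    | zero =>
      constructor
      · intro g hg; simp [hS, auxList] at hg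
      · have : S 0 = ∅ := by ext g; simp [hS, auxList]
        rw [this]; exact Set.finite_empty
    | succ n ih =>
      rw [hSsucc n]
      refine ⟨?_, ih.2.insert _⟩
      intro g hg
      rcases hg with hg | hg
      · subst hg; exact (hch (S n) ih).1
      · exact ih.1 hg
  have spec : ∀ n, seq n ∈ A ∧ ∀ g, (g ∈ B ∨ g ∈ S n) → ¬ TuringLe g (seq n) :=
    fun n => hch (S n) (hSA n)
  have hmem : ∀ n, seq n ∈ S (n + 1) := by
    intro n; rw [hSsucc n]; exact Set.mem_insert _ _
  have hmono : ∀ n, S n ⊆ S (n + 1) := by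
    intro n; rw [hSsucc n]; exact Set.subset_insert _ _
  have hmemlt : ∀ i n, i < n → seq i ∈ S n := by
    intro i n
    induction n with
    | zero => omega
    | succ n ih =>
      intro hin
      rcases Nat.lt_succ_iff_lt_or_eq.mp hin with hin | hin
      · exact hmono n (ih hin)
      · subst hin; exact hmem i
  constructor
  · refine ⟨seq 0, (spec 0).1, ?_, ?_, ?_⟩
    · intro g hg
      rcases hg with rfl
      exact ⟨seq 0, (spec 0).1, turingLe_refl _⟩
    · intro hc
      obtain ⟨g, hgB, hgle⟩ := hc (seq 0) rfl
      exact (spec 0).2 g (Or.inl hgB) hgle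
    · exact h {seq 0} (by simpa using (spec 0).1) (Set.finite_singleton _)
  · intro hAB
    refine ⟨fun n => B ∪ S (n + 1), fun n => ⟨⟨?_, ?_⟩, ⟨?_, ?_⟩, ⟨?_, ?_⟩⟩⟩
    · -- A ≤_w D (n+1)
      intro g hg
      rcases hg with hg | hg
      · exact hAB g hg
      · exact ⟨g, (hSA (n + 2)).1 hg, turingLe_refl _⟩
    · -- ¬ D (n+1) ≤_w A
      exact h (S (n + 2)) (hSA (n + 2)).1 (hSA (n + 2)).2
    · -- D (n+1) ≤_w D n
      intro g hg
      refine ⟨g, ?_, turingLe_refl _⟩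
      rcases hg with hg | hg
      · exact Or.inl hg
      · exact Or.inr (hmono (n + 1) hg)
    · -- ¬ D n ≤_w D (n+1)
      intro hc
      obtain ⟨g, hgmem, hgle⟩ := hc (seq (n + 1)) (Or.inr (hmem (n + 1)))
      exact (spec (n + 1)).2 g hgmem hgle
    · -- D n ≤_w B
      intro g hg
      exact ⟨g, Or.inl hg, turingLe_refl _⟩
    · -- ¬ B ≤_w D n
      intro hc
      obtain ⟨g, hgB, hgle⟩ := hc (seq 0) (Or.inr (hmemlt 0 (n + 1) (Nat.succ_pos n)))
      exact (spec 0).2 g (Or.inl hgB) hgle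

end Muchnik
end

section
/- Suppose for each finite binary string σ ∈ 2^{<ω} a finite set C_σ ⊆ ω^ω is given such that σ ⊑ τ implies C_σ ⊆ C_τ, and for α ∈ 2^ω set C_α = ⋃_{n∈ℕ} C_{α↾n}. Then there exists a set 𝕋 ⊆ 2^ω of cardinality 2^{ℵ₀} such that for all distinct α, β ∈ 𝕋 and all f ∈ C_α and g ∈ C_β, the functions α ⊕ f and β ⊕ g are Turing incomparable. -/
open Cardinal

namespace Muchnik

/-! Call a relation `P` on `2^ω` forceable if any two strings `σ, τ` have extensions `σ', τ'`
such that `P α β` holds for all `α ⊒ σ'`, `β ⊒ τ'`. Forceable relations are closed under finite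
conjunctions, so a perfect tree can be built level by level, extending every pair of distinct
nodes of level `n + 1` so as to force the first `n` of countably many forceable requirements;
distinct branches then satisfy all of them. The requirement "`Φ_c(α ⊕ f) ≠ β ⊕ g` for all
`f ∈ C (α ↾ j)` and `g ∈ C (β ↾ l)`" is forceable: once `σ, τ` are longer than `j, l` only finitely
many pairs `f, g` remain, and for each of them either `Φ_c(α ⊕ f)(2|τ|)` diverges for all `α ⊒ σ`,
or it converges to some `v` for some such `α`, with finite use, and `β(|τ|)` is chosen so that
`(β ⊕ g)(2|τ|) ≠ v`. -/

def cylinder (σ : List Bool) : Set (ℕ → Bool) := {α | ∀ i (h : i < σ.length), σ[i] = α i}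

theorem cylinder_anti {σ τ : List Bool} (h : σ <+: τ) : cylinder τ ⊆ cylinder σ :=
  fun _ hα i hi => (h.getElem hi).trans (hα i _)

theorem cylinder_ofFn (x : ℕ → Bool) (n : ℕ) :
    cylinder (List.ofFn fun i : Fin n => x i) = PiNat.cylinder x n := by
  ext α
  simp [cylinder, PiNat.cylinder, eq_comm]

theorem ofFn_eq_take_of_mem_cylinder {σ : List Bool} {α : ℕ → Bool} (hα : α ∈ cylinder σ)
    {n : ℕ} (hn : n ≤ σ.length) : (List.ofFn fun i : Fin n => α i) = σ.take n :=
  List.ext_getElem (by simp [hn]) fun i _ hi => by simp at hi; simp [hα i (by omega)]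

theorem prefix_ofFn_of_mem_cylinder {σ : List Bool} {α : ℕ → Bool} (hα : α ∈ cylinder σ)
    {n : ℕ} (hn : σ.length ≤ n) : σ <+: List.ofFn fun i : Fin n => α i := by
  have hσ : σ = (List.ofFn fun i : Fin n => α i).take σ.length := by
    rw [← ofFn_eq_take_of_mem_cylinder (cylinder_ofFn α n ▸ PiNat.self_mem_cylinder α n)
      (by simpa), ofFn_eq_take_of_mem_cylinder hα le_rfl, List.take_length]
  exact hσ ▸ List.take_prefix _ _

theorem apply_length_eq_of_mem_cylinder {σ τ : List Bool} {b : Bool} (h : σ ++ [b] <+: τ)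
    {α : ℕ → Bool} (hα : α ∈ cylinder τ) : α σ.length = b := by
  simpa using (hα σ.length (by simpa using h.length_le)).symm.trans (h.getElem (by simp)).symm

section Forcing

variable (P : (ℕ → Bool) → (ℕ → Bool) → Prop)

def Forces (σ τ : List Bool) : Prop := ∀ α ∈ cylinder σ, ∀ β ∈ cylinder τ, P α β

def Forceable : Prop := ∀ σ τ : List Bool, ∃ σ' τ', σ <+: σ' ∧ τ <+: τ' ∧ Forces P σ' τ'

variable {P}

theorem Forces.mono {σ σ' τ τ' : List Bool} (h : Forces P σ τ) (hσ : σ <+: σ')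
    (hτ : τ <+: τ') : Forces P σ' τ' :=
  fun α hα β hβ => h α (cylinder_anti hσ hα) β (cylinder_anti hτ hβ)

theorem forceable_forall_mem {ι : Type*} {P : ι → (ℕ → Bool) → (ℕ → Bool) → Prop} {s : Set ι}
    (hs : s.Finite) (h : ∀ i ∈ s, Forceable (P i)) :
    Forceable fun α β => ∀ i ∈ s, P i α β := by
  induction s, hs using Set.Finite.induction_on with
  | empty => exact fun σ τ => ⟨σ, τ, List.prefix_rfl, List.prefix_rfl, by simp [Forces]⟩
  | @insert a s _ _ ih =>
    intro σ τ
    obtain ⟨σ₁, τ₁, hσ₁, hτ₁, ha⟩ := h a (Set.mem_insert a s) σ τ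
    obtain ⟨σ₂, τ₂, hσ₂, hτ₂, hs⟩ := ih (fun i hi => h i (Set.mem_insert_of_mem a hi)) σ₁ τ₁
    refine ⟨σ₂, τ₂, hσ₁.trans hσ₂, hτ₁.trans hτ₂, fun α hα β hβ i hi => ?_⟩
    rcases hi with rfl | hi
    · exact ha.mono hσ₂ hτ₂ α hα β hβ
    · exact hs α hα β hβ i hi

theorem forceable_forall_mem_ofFn {γ : Type*} {C : List Bool → Set γ}
    (hfin : ∀ σ, (C σ).Finite) {Q : γ → γ → (ℕ → Bool) → (ℕ → Bool) → Prop}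
    (hQ : ∀ f g, Forceable (Q f g)) (j l : ℕ) :
    Forceable fun α β => ∀ f ∈ C (List.ofFn fun i : Fin j => α i),
      ∀ g ∈ C (List.ofFn fun i : Fin l => β i), Q f g α β := by
  intro σ τ
  set σ₀ := σ ++ List.replicate j false
  set τ₀ := τ ++ List.replicate l false
  obtain ⟨σ', τ', hσ', hτ', hforce⟩ := forceable_forall_mem
    ((hfin (σ₀.take j)).prod (hfin (τ₀.take l))) (fun p _ => hQ p.1 p.2) σ₀ τ₀
  refine ⟨σ', τ', (List.prefix_append _ _).trans hσ', (List.prefix_append _ _).trans hτ',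
    fun α hα β hβ f hf g hg => hforce α hα β hβ (f, g) ⟨?_, ?_⟩⟩
  · rwa [← ofFn_eq_take_of_mem_cylinder (cylinder_anti hσ' hα) (by simp [σ₀])]
  · rwa [← ofFn_eq_take_of_mem_cylinder (cylinder_anti hτ' hβ) (by simp [τ₀])]

end Forcing

theorem Forceable.exists_extension_pairwise {P : (ℕ → Bool) → (ℕ → Bool) → Prop}
    (hP : Forceable P) {ι : Type*} [Finite ι] (V : ι → List Bool) :
    ∃ V' : ι → List Bool, (∀ i, V i <+: V' i) ∧ ∀ i j, i ≠ j → Forces P (V' i) (V' j) := by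
  classical
  suffices H : ∀ s : Set (ι × ι), s.Finite → ∀ V : ι → List Bool, ∃ V' : ι → List Bool,
      (∀ i, V i <+: V' i) ∧ ∀ p ∈ s, p.1 ≠ p.2 → Forces P (V' p.1) (V' p.2) by
    obtain ⟨V', hext, hforce⟩ := H Set.univ Set.finite_univ V
    exact ⟨V', hext, fun i j hij => hforce (i, j) trivial hij⟩
  intro s hs
  induction s, hs using Set.Finite.induction_on with
  | empty => exact fun V => ⟨V, fun _ => List.prefix_rfl, by simp⟩
  | @insert p s _ _ ih =>
    intro V
    obtain ⟨i, j⟩ := p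
    by_cases hij : i = j
    · obtain ⟨V', hext, hforce⟩ := ih V
      refine ⟨V', hext, ?_⟩
      rintro q (rfl | hq)
      exacts [fun h => absurd hij h, hforce q hq]
    obtain ⟨σ, τ, hσ, hτ, hστ⟩ := hP (V i) (V j)
    set V₁ := Function.update (Function.update V i σ) j τ
    have hV₁i : V₁ i = σ := by simp [V₁, hij]
    have hV₁j : V₁ j = τ := by simp [V₁]
    have hext₁ : ∀ u, V u <+: V₁ u := by
      intro u
      simp only [V₁, Function.update_apply]
      split_ifs with hj hi
      · exact hj ▸ hτ
      · exact hi ▸ hσ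
      · exact List.prefix_rfl
    obtain ⟨V', hext, hforce⟩ := ih V₁
    refine ⟨V', fun u => (hext₁ u).trans (hext u), ?_⟩
    rintro q (rfl | hq)
    · exact fun _ => hστ.mono (hV₁i ▸ hext i) (hV₁j ▸ hext j)
    · exact hforce q hq

theorem exists_levels_of_forceable {P : ℕ → (ℕ → Bool) → (ℕ → Bool) → Prop}
    (hP : ∀ n, Forceable (P n)) :
    ∃ T : (n : ℕ) → (Fin n → Bool) → List Bool,
      (∀ n v, T n (Fin.init v) ++ [v (Fin.last n)] <+: T (n + 1) v) ∧
      ∀ n v w, v ≠ w → Forces (P n) (T (n + 1) v) (T (n + 1) w) := by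
  choose next hnext using fun n (V : (Fin n → Bool) → List Bool) =>
    (hP n).exists_extension_pairwise fun v : Fin (n + 1) → Bool =>
      V (Fin.init v) ++ [v (Fin.last n)]
  let T : (n : ℕ) → (Fin n → Bool) → List Bool :=
    fun n => Nat.rec (fun _ => []) (fun n V => next n V) n
  exact ⟨T, fun n => (hnext n (T n)).1, fun n => (hnext n (T n)).2⟩

theorem exists_mem_cylinder_of_append_prefix {c : ℕ → List Bool} {b : ℕ → Bool}
    (h : ∀ n, c n ++ [b n] <+: c (n + 1)) : ∃ α, ∀ n, α ∈ cylinder (c n) := by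
  have hmono : ∀ m n, m ≤ n → c m <+: c n := by
    intro m n hmn
    induction n, hmn using Nat.le_induction with
    | base => exact List.prefix_rfl
    | succ n _ ih => exact ih.trans ((List.prefix_append _ _).trans (h n))
  have hgrow : ∀ n, (c n).length < (c (n + 1)).length := fun n => by
    simpa using (h n).length_le
  have hlen : ∀ n, n < (c (n + 1)).length := by
    intro n
    induction n with
    | zero => exact (Nat.zero_le _).trans_lt (hgrow 0)
    | succ n ih => exact Nat.lt_of_le_of_lt ih (hgrow _)
  refine ⟨fun i => (c (i + 1)).getD i false, fun n i hi => ?_⟩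
  show _ = (c (i + 1)).getD i false
  rw [List.getD_eq_getElem _ _ (hlen i)]
  rcases le_total n (i + 1) with hn | hn
  · exact (hmono _ _ hn).getElem hi
  · exact ((hmono _ _ hn).getElem (hlen i)).symm

theorem exists_injective_pairwise_of_forceable {ι : Type*} [Countable ι]
    {R : ι → (ℕ → Bool) → (ℕ → Bool) → Prop} (hR : ∀ k, Forceable (R k)) :
    ∃ F : (ℕ → Bool) → ℕ → Bool, Function.Injective F ∧
      ∀ x y, x ≠ y → ∀ k, R k (F x) (F y) := by
  obtain ⟨e, he⟩ := Countable.exists_injective_nat ι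
  obtain ⟨T, hsplit, hforce⟩ := exists_levels_of_forceable fun n =>
    forceable_forall_mem ((Set.finite_Iic n).preimage he.injOn) fun k _ => hR k
  choose F hF using fun x : ℕ → Bool =>
    exists_mem_cylinder_of_append_prefix fun n => hsplit n fun i : Fin (n + 1) => x i
  refine ⟨F, fun x y hFxy => ?_, fun x y hxy k => ?_⟩
  · by_contra hxy
    set d := PiNat.firstDiff x y
    have hxd : F x (T d fun i => x i).length = x d :=
      apply_length_eq_of_mem_cylinder (hsplit d fun i : Fin (d + 1) => x i) (hF x (d + 1))
    have hyd : F y (T d fun i => y i).length = y d :=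
      apply_length_eq_of_mem_cylinder (hsplit d fun i : Fin (d + 1) => y i) (hF y (d + 1))
    have hagree : (fun i : Fin d => x i) = fun i : Fin d => y i :=
      funext fun i => PiNat.apply_eq_of_lt_firstDiff i.isLt
    exact PiNat.apply_firstDiff_ne hxy (hxd.symm.trans (hagree ▸ hFxy ▸ hyd))
  · set n := max (e k) (PiNat.firstDiff x y)
    have hvw : (fun i : Fin (n + 1) => x i) ≠ fun i : Fin (n + 1) => y i := fun h =>
      PiNat.apply_firstDiff_ne hxy (congrFun h ⟨PiNat.firstDiff x y, by omega⟩)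
    exact hforce n _ _ hvw (F x) (hF x (n + 1)) (F y) (hF y (n + 1)) k
      (show e k ≤ n from le_max_left _ _)

/-- Programs for `RecursiveIn`, so that one reduction can be run relative to different oracles. -/
inductive Code
  | oracle | zero | succ | left | right
  | pair (a b : Code)
  | comp (a b : Code)
  | prec (a b : Code)
  | rfind (a : Code)
  deriving Countable

def eval (g : ℕ → ℕ) : Code → ℕ →. ℕ
  | .oracle => ↑g
  | .zero => pure 0
  | .succ => ↑Nat.succ
  | .left => ↑fun n : ℕ => n.unpair.1
  | .right => ↑fun n : ℕ => n.unpair.2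
  | .pair a b => fun n => Nat.pair <$> eval g a n <*> eval g b n
  | .comp a b => fun n => eval g b n >>= eval g a
  | .prec a b => Nat.unpaired fun x n =>
      n.rec (eval g a x) fun y IH => do let i ← IH; eval g b (Nat.pair x (Nat.pair y i))
  | .rfind a => fun x => Nat.rfind fun n => (fun m => m = 0) <$> eval g a (Nat.pair x n)

theorem RecursiveIn.exists_eval_eq {g : ℕ → ℕ} {f : ℕ →. ℕ} (h : RecursiveIn g f) :
    ∃ c : Code, eval g c = f := by
  induction h with
  | oracle => exact ⟨.oracle, rfl⟩
  | zero => exact ⟨.zero, rfl⟩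
  | succ => exact ⟨.succ, rfl⟩
  | left => exact ⟨.left, rfl⟩
  | right => exact ⟨.right, rfl⟩
  | pair _ _ ih₁ ih₂ =>
      obtain ⟨c₁, rfl⟩ := ih₁; obtain ⟨c₂, rfl⟩ := ih₂; exact ⟨.pair c₁ c₂, rfl⟩
  | comp _ _ ih₁ ih₂ =>
      obtain ⟨c₁, rfl⟩ := ih₁; obtain ⟨c₂, rfl⟩ := ih₂; exact ⟨.comp c₁ c₂, rfl⟩
  | prec _ _ ih₁ ih₂ =>
      obtain ⟨c₁, rfl⟩ := ih₁; obtain ⟨c₂, rfl⟩ := ih₂; exact ⟨.prec c₁ c₂, rfl⟩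
  | rfind _ ih =>
      obtain ⟨c, rfl⟩ := ih; exact ⟨.rfind c, rfl⟩

section OpenFibers

variable {X : Type*} [TopologicalSpace X]

theorem isOpen_setOf_mem_bind {α β : Type*} {p : X → Part α} {f : X → α → Part β}
    (hp : ∀ a, IsOpen {x | a ∈ p x}) (hf : ∀ a b, IsOpen {x | b ∈ f x a}) (b : β) :
    IsOpen {x | b ∈ (p x).bind (f x)} := by
  simp only [Part.mem_bind_iff, Set.ofPred_exists, Set.ofPred_and]
  exact isOpen_iUnion fun a => (hp a).inter (hf a b)

theorem isOpen_setOf_mem_map {α β : Type*} {p : X → Part α} (f : α → β)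
    (hp : ∀ a, IsOpen {x | a ∈ p x}) (b : β) :
    IsOpen {x | b ∈ (p x).map f} := by
  simp only [Part.mem_map_iff, Set.ofPred_exists, Set.ofPred_and]
  exact isOpen_iUnion fun a => (hp a).inter isOpen_const

theorem isOpen_setOf_mem_rfind {p : X → ℕ →. Bool}
    (hp : ∀ n b, IsOpen {x | b ∈ p x n}) (m : ℕ) :
    IsOpen {x | m ∈ Nat.rfind (p x)} := by
  have : {x | m ∈ Nat.rfind (p x)} =
      {x | true ∈ p x m} ∩ ⋂ k ∈ Finset.range m, {x | false ∈ p x k} := by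
    ext x
    rw [Set.mem_ofPred_eq, Nat.mem_rfind]
    simp
  rw [this]
  exact (hp m true).inter (isOpen_biInter_finset fun k _ => hp k false)

end OpenFibers

theorem isOpen_setOf_mem_eval (c : Code) (n m : ℕ) :
    IsOpen {g : ℕ → ℕ | m ∈ eval g c n} := by
  induction c generalizing n m with
  | oracle =>
    have : {g : ℕ → ℕ | m ∈ eval g .oracle n} = (fun g => g n) ⁻¹' {m} := by
      ext g
      simp [eval, eq_comm]
    exact this ▸ (isOpen_discrete _).preimage (continuous_apply n)
  | zero | succ | left | right => simp only [eval]; exact isOpen_const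
  | pair a b iha ihb =>
    exact isOpen_setOf_mem_bind (isOpen_setOf_mem_map _ (iha n))
      (fun h => isOpen_setOf_mem_map h (ihb n)) m
  | comp a b iha ihb => exact isOpen_setOf_mem_bind (ihb n) iha m
  | prec a b iha ihb =>
    simp only [eval, Nat.unpaired]
    induction n.unpair.2 generalizing m with
    | zero => exact iha _ m
    | succ k ih => exact isOpen_setOf_mem_bind ih (fun i => ihb _) m
  | rfind a iha => exact isOpen_setOf_mem_rfind (fun k b => isOpen_setOf_mem_map _ (iha _) b) m

theorem PiNat.exists_cylinder_subset {E : ℕ → Type*} [∀ n, TopologicalSpace (E n)]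
    [∀ n, DiscreteTopology (E n)] {U : Set (∀ n, E n)} (hU : IsOpen U) {x : ∀ n, E n}
    (hx : x ∈ U) : ∃ n, PiNat.cylinder x n ⊆ U := by
  obtain ⟨_, ⟨y, n, rfl⟩, hxy, hyU⟩ :=
    (PiNat.isTopologicalBasis_cylinders E).exists_subset_of_mem_open hx hU
  exact ⟨n, PiNat.mem_cylinder_iff_eq.mp hxy ▸ hyU⟩

theorem continuous_join_ofBool (f : ℕ → ℕ) :
    Continuous fun α : ℕ → Bool => join (ofBool α) f := by
  refine continuous_pi fun n => ?_
  unfold join ofBool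
  split_ifs
  · exact (continuous_of_discreteTopology (f := fun b : Bool => if b then 1 else 0)).comp
      (continuous_apply (n / 2))
  · exact continuous_const

theorem forceable_eval_ne (f g : ℕ → ℕ) (c : Code) :
    Forceable fun α β => eval (join (ofBool α) f) c ≠ ↑(join (ofBool β) g) := by
  intro σ τ
  by_cases hdom : ∃ α₀ ∈ cylinder σ, (eval (join (ofBool α₀) f) c (2 * τ.length)).Dom
  · obtain ⟨α₀, hα₀, hv⟩ := hdom
    set v := (eval (join (ofBool α₀) f) c (2 * τ.length)).get hv
    obtain ⟨n, hn⟩ := PiNat.exists_cylinder_subset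
      ((isOpen_setOf_mem_eval c (2 * τ.length) v).preimage (continuous_join_ofBool f))
      (Part.get_mem hv)
    refine ⟨List.ofFn fun i : Fin (max n σ.length) => α₀ i, τ ++ [decide (v = 0)],
      prefix_ofFn_of_mem_cylinder hα₀ (le_max_right _ _), List.prefix_append _ _,
      fun α hα β hβ heq => ?_⟩
    have hαv : v ∈ eval (join (ofBool α) f) c (2 * τ.length) :=
      hn (PiNat.cylinder_anti α₀ (le_max_left _ _) (cylinder_ofFn α₀ _ ▸ hα))
    have hβ : β τ.length = decide (v = 0) := apply_length_eq_of_mem_cylinder List.prefix_rfl hβ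
    rw [heq, PFun.coe_val, Part.mem_some_iff] at hαv
    simp only [join, ofBool, Nat.mul_mod_right, Nat.mul_div_cancel_left _ two_pos, hβ] at hαv
    by_cases hv : v = 0 <;> simp [hv] at hαv
  · refine ⟨σ, τ, List.prefix_rfl, List.prefix_rfl, fun α hα β _ heq => hdom ⟨α, hα, ?_⟩⟩
    rw [heq]
    trivial

theorem perfect_set_of_incomparable_indices_general (C : List Bool → Set (ℕ → ℕ))
    (hfin : ∀ σ : List Bool, (C σ).Finite) :
    ∃ 𝕋 : Set (ℕ → Bool), #𝕋 = (2 : Cardinal) ^ Cardinal.aleph0 ∧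
      ∀ α ∈ 𝕋, ∀ β ∈ 𝕋, α ≠ β →
        ∀ f ∈ ⋃ n : ℕ, C (List.ofFn fun i : Fin n => α i),
        ∀ g ∈ ⋃ n : ℕ, C (List.ofFn fun i : Fin n => β i),
          TuringIncomp (join (ofBool α) f) (join (ofBool β) g) := by
  obtain ⟨F, hF, hreq⟩ := exists_injective_pairwise_of_forceable fun k : ℕ × ℕ × Code =>
    forceable_forall_mem_ofFn hfin (fun f g => forceable_eval_ne f g k.2.2) k.1 k.2.1
  have not_le : ∀ x y, x ≠ y →
      ∀ f ∈ ⋃ n : ℕ, C (List.ofFn fun i : Fin n => F x i),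
      ∀ g ∈ ⋃ n : ℕ, C (List.ofFn fun i : Fin n => F y i),
        ¬ TuringLe (join (ofBool (F y)) g) (join (ofBool (F x)) f) := by
    intro x y hxy f hf g hg hle
    obtain ⟨j, hf⟩ := Set.mem_iUnion.mp hf
    obtain ⟨l, hg⟩ := Set.mem_iUnion.mp hg
    obtain ⟨c, hc⟩ := RecursiveIn.exists_eval_eq hle
    exact hreq x y hxy (j, l, c) f hf g hg hc
  refine ⟨Set.range F, ?_, ?_⟩
  · rw [Cardinal.mk_range_eq _ hF, ← Cardinal.power_def, Cardinal.mk_bool, Cardinal.mk_nat]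
  · rintro _ ⟨x, rfl⟩ _ ⟨y, rfl⟩ hFxy f hf g hg
    have hxy : x ≠ y := fun h => hFxy (congrArg F h)
    exact ⟨not_le y x hxy.symm g hg f hf, not_le x y hxy f hf g hg⟩

/-- Given finite sets `C σ ⊆ ω^ω` for finite binary strings `σ`, monotone under the prefix
relation, and letting `C_α = ⋃ n, C (α ↾ n)` for `α ∈ 2^ω`, there is a set `𝕋 ⊆ 2^ω` of
cardinality `2 ^ ℵ₀` such that for distinct `α, β ∈ 𝕋` and all `f ∈ C_α`, `g ∈ C_β`,
the functions `α ⊕ f` and `β ⊕ g` are Turing incomparable. -/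
theorem perfect_set_of_incomparable_indices (C : List Bool → Set (ℕ → ℕ))
    (hfin : ∀ σ : List Bool, (C σ).Finite)
    (hmono : ∀ σ τ : List Bool, σ <+: τ → C σ ⊆ C τ) :
    ∃ 𝕋 : Set (ℕ → Bool), #𝕋 = (2 : Cardinal) ^ Cardinal.aleph0 ∧
      ∀ α ∈ 𝕋, ∀ β ∈ 𝕋, α ≠ β →
        ∀ f ∈ ⋃ n : ℕ, C (List.ofFn fun i : Fin n => α i),
        ∀ g ∈ ⋃ n : ℕ, C (List.ofFn fun i : Fin n => β i),
          TuringIncomp (join (ofBool α) f) (join (ofBool β) g) :=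
  perfect_set_of_incomparable_indices_general C hfin

end Muchnik
end
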